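/- arXiv:1911.12344 — 2 statements merged into one kernel-verified Lean document; each statement's English description precedes it below -/
import Mathlib

section
/- Let X be a set, K : X × X → ℂ a positive definite kernel with reproducing kernel Hilbert space H(K), let (B, F_B, μ) be a sigma-finite measure space, (k_x)_{x∈X} a family in L²(B,μ), and set K^{(μ)}(x,y) := ⟨k_x, k_y⟩_{L²(μ)}. Suppose that for every φ ∈ L²(B,μ) the function x ↦ ⟨k_x, φ⟩_{L²(μ)} belongs to H(K) with H(K)-norm at most ‖φ‖_{L²(μ)}. Then K^{(μ)} ≪ K, i.e., for every finite family x₁,…,x_N ∈ X and scalars c₁,…,c_N ∈ ℂ, Σ_{i,j} conj(cᵢ)·cⱼ·K^{(μ)}(xᵢ,xⱼ) ≤ Σ_{i,j} conj(cᵢ)·cⱼ·K(xᵢ,xⱼ). -/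
open MeasureTheory
open scoped ComplexInnerProductSpace ComplexOrder

noncomputable section

/-- The quadratic form `∑ᵢ∑ⱼ conj(cᵢ)·cⱼ·K(xᵢ,xⱼ)` attached to a kernel `K`. -/
def pdSum {X : Type*} (K : X → X → ℂ) {N : ℕ} (x : Fin N → X) (c : Fin N → ℂ) : ℂ :=
  ∑ i, ∑ j, (starRingEnd ℂ) (c i) * c j * K (x i) (x j)

/-- `K` is a positive definite kernel. -/
def IsPosDefKernel {X : Type*} (K : X → X → ℂ) : Prop :=
  ∀ (N : ℕ) (x : Fin N → X) (c : Fin N → ℂ), 0 ≤ pdSum K x c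

/-- The order `K ≪ L` on kernels. -/
def KernelLE {X : Type*} (K L : X → X → ℂ) : Prop :=
  ∀ (N : ℕ) (x : Fin N → X) (c : Fin N → ℂ), pdSum K x c ≤ pdSum L x c

/-!
Both quadratic forms are squared norms: of `u = ∑ cᵢ k_{xᵢ}` in `L²(μ)` and of
`v = ∑ cᵢ K(·, xᵢ)` in `H(K)`. Representing `φ = u` gives `g ∈ H(K)` with `⟪v, g⟫ = ‖u‖²`
by the reproducing property and `‖g‖ ≤ ‖u‖`, so Cauchy–Schwarz yields `‖u‖² ≤ ‖v‖ ‖u‖`.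
-/

section GramKernel

variable {X E F : Type*} [NormedAddCommGroup E] [InnerProductSpace ℂ E]
  [NormedAddCommGroup F] [InnerProductSpace ℂ F]

lemma pdSum_inner_eq_norm_sq (w : X → E) {N : ℕ} (x : Fin N → X) (c : Fin N → ℂ) :
    pdSum (fun a b => ⟪w a, w b⟫) x c = (‖∑ i, c i • w (x i)‖ : ℂ) ^ 2 := by
  refine Eq.trans ?_ (inner_self_eq_norm_sq_to_K (𝕜 := ℂ) (∑ i, c i • w (x i)))
  rw [sum_inner, pdSum]
  refine Finset.sum_congr rfl fun i _ => ?_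
  rw [inner_smul_left, inner_sum, Finset.mul_sum]
  refine Finset.sum_congr rfl fun j _ => ?_
  rw [inner_smul_right]; ring

lemma norm_le_of_inner_eq_inner_self {u : E} {v g : F} (hvg : ⟪v, g⟫ = ⟪u, u⟫)
    (hg : ‖g‖ ≤ ‖u‖) : ‖u‖ ≤ ‖v‖ := by
  rcases (norm_nonneg u).eq_or_lt with hu | hu
  · rw [← hu]; exact norm_nonneg v
  · refine le_of_mul_le_mul_right ?_ hu
    calc ‖u‖ * ‖u‖ = RCLike.re ⟪v, g⟫ := by rw [hvg, inner_self_eq_norm_mul_norm]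
      _ ≤ ‖v‖ * ‖g‖ := re_inner_le_norm v g
      _ ≤ ‖v‖ * ‖u‖ := by gcongr

theorem kernelLE_inner_of_forall_exists_norm_le {w : X → E} {w' : X → F}
    (hS : ∀ φ : E, ∃ g : F, (∀ x, ⟪w' x, g⟫ = ⟪w x, φ⟫) ∧ ‖g‖ ≤ ‖φ‖) :
    KernelLE (fun a b => ⟪w a, w b⟫) (fun a b => ⟪w' a, w' b⟫) := by
  intro N x c
  set u := ∑ i, c i • w (x i)
  set v := ∑ i, c i • w' (x i)
  obtain ⟨g, hrepr, hg⟩ := hS u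
  have hvg : ⟪v, g⟫ = ⟪u, u⟫ := by
    simp only [u, v, sum_inner, inner_smul_left, hrepr]
  rw [pdSum_inner_eq_norm_sq, pdSum_inner_eq_norm_sq, ← Complex.ofReal_pow, ← Complex.ofReal_pow,
    Complex.real_le_real]
  gcongr
  exact norm_le_of_inner_eq_inner_self hvg hg

end GramKernel

theorem stmt_4_general {X : Type*} (K : X → X → ℂ)
    {H : Type*} [NormedAddCommGroup H] [InnerProductSpace ℂ H]
    (ι : H →ₗ[ℂ] (X → ℂ))
    (kH : X → H) (hkH : ∀ x, ι (kH x) = fun y => K y x)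
    (hrep : ∀ (g : H) (x : X), ι g x = ⟪kH x, g⟫)
    {B : Type*} [MeasurableSpace B] (μ : Measure B)
    (k : X → Lp ℂ 2 μ)
    (hS : ∀ φ : Lp ℂ 2 μ, ∃ g : H,
      ι g = (fun x => ⟪k x, φ⟫) ∧ ‖g‖ ≤ ‖φ‖) :
    KernelLE (fun x y => ⟪k x, k y⟫) K := by
  have hK_gram : K = fun a b => ⟪kH a, kH b⟫ := by
    ext a b
    rw [← hrep, hkH]
  rw [hK_gram]
  refine kernelLE_inner_of_forall_exists_norm_le fun φ => ?_
  obtain ⟨g, hιg, hg⟩ := hS φ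
  exact ⟨g, fun x => by rw [← hrep, hιg], hg⟩

theorem stmt_4 {X : Type*} (K : X → X → ℂ) (hK : IsPosDefKernel K)
    {H : Type*} [NormedAddCommGroup H] [InnerProductSpace ℂ H] [CompleteSpace H]
    (ι : H →ₗ[ℂ] (X → ℂ)) (hι : Function.Injective ι)
    (kH : X → H) (hkH : ∀ x, ι (kH x) = fun y => K y x)
    (hrep : ∀ (g : H) (x : X), ι g x = ⟪kH x, g⟫)
    {B : Type*} [MeasurableSpace B] (μ : Measure B) [SigmaFinite μ]
    (k : X → Lp ℂ 2 μ)
    (hS : ∀ φ : Lp ℂ 2 μ, ∃ g : H,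
      ι g = (fun x => ⟪k x, φ⟫) ∧ ‖g‖ ≤ ‖φ‖) :
    KernelLE (fun x y => ⟪k x, k y⟫) K :=
  stmt_4_general K ι kH hkH hrep μ k hS
end
end

section
/- Let X be a set and K, L : X × X → ℂ positive definite kernels with K ≪ L, with reproducing kernel Hilbert spaces H(K) and H(L) respectively, and suppose H(K) is separable and H(L) equals the closed linear span of {L(·,x) : x ∈ X}. Then there exists a bounded linear operator T : H(L) → ℓ²(ℕ) with ‖T‖ ≤ 1 such that ⟨T(L(·,x)), T(L(·,y))⟩_{ℓ²} = K(x,y) for all x, y ∈ X; equivalently, (T*T L(·,y))(x) = K(x,y) for all x, y ∈ X. -/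
/-!
Because `K ≪ L`, every finite combination satisfies `‖∑ cᵢ K(·,xᵢ)‖ ≤ ‖∑ cᵢ L(·,xᵢ)‖`, so
`L(·,x) ↦ K(·,x)` extends from the dense span of the `L(·,x)` to a contraction `S : H(L) → H(K)`.
A countable Hilbert basis of the separable space `H(K)` embeds it isometrically into `ℓ²(ℕ)`;
composing gives `T`, with `⟪T L(·,x), T L(·,y)⟫ = ⟪K(·,x), K(·,y)⟫ = K(x,y)`, and the adjoint
form is this identity read through the reproducing property of `H(L)`.
-/

open scoped ComplexInnerProductSpace ComplexOrder

noncomputable section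

theorem Orthonormal.countable {𝕜 E ι : Type*} [RCLike 𝕜] [NormedAddCommGroup E]
    [InnerProductSpace 𝕜 E] [TopologicalSpace.SeparableSpace E] {v : ι → E}
    (hv : Orthonormal 𝕜 v) : Countable ι := by
  refine Pairwise.countable_of_isOpen_disjoint (s := fun i => Metric.ball (v i) (1 / 2))
    (fun i j hij => Metric.ball_disjoint_ball ?_) (fun _ => Metric.isOpen_ball)
    (fun _ => Metric.nonempty_ball.mpr one_half_pos)
  have hsq : ‖v i - v j‖ ^ 2 = 2 := by
    rw [norm_sub_sq (𝕜 := 𝕜), hv.norm_eq_one, hv.norm_eq_one, hv.inner_eq_zero hij]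
    norm_num
  rw [dist_eq_norm]
  nlinarith [norm_nonneg (v i - v j)]

theorem exists_linearIsometry_lp_nat (𝕜 E : Type*) [RCLike 𝕜] [NormedAddCommGroup E]
    [InnerProductSpace 𝕜 E] [CompleteSpace E] [TopologicalSpace.SeparableSpace E] :
    Nonempty (E →ₗᵢ[𝕜] lp (fun _ : ℕ => 𝕜) 2) := by
  obtain ⟨w, b, -⟩ := exists_hilbertBasis 𝕜 E
  have : Countable w := b.orthonormal.countable
  obtain ⟨g, hg⟩ := Countable.exists_injective_nat w
  have hv := (default : HilbertBasis ℕ 𝕜 (lp (fun _ : ℕ => 𝕜) 2)).orthonormal.comp g hg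
  exact ⟨hv.orthogonalFamily.linearIsometry.comp b.repr.toLinearIsometry⟩

theorem inner_sum_smul_self_eq_pdSum {X H : Type*} [NormedAddCommGroup H]
    [InnerProductSpace ℂ H] (k : X → H) {N : ℕ} (x : Fin N → X) (c : Fin N → ℂ) :
    ⟪∑ i, c i • k (x i), ∑ i, c i • k (x i)⟫ = pdSum (fun a b => ⟪k a, k b⟫) x c := by
  simp_rw [pdSum, sum_inner, inner_sum, inner_smul_left, inner_smul_right, mul_assoc]

theorem Finsupp.linearCombination_eq_sum_equivFin {R M X : Type*} [Semiring R]
    [AddCommMonoid M] [Module R M] (v : X → M) (c : X →₀ R) :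
    Finsupp.linearCombination R v c =
      ∑ i, c (c.support.equivFin.symm i) • v (c.support.equivFin.symm i) := by
  rw [Finsupp.linearCombination_apply, Finsupp.sum, ← Finset.sum_coe_sort,
    ← c.support.equivFin.symm.sum_comp]

theorem KernelLE.norm_linearCombination_le {X HK HL : Type*}
    [NormedAddCommGroup HK] [InnerProductSpace ℂ HK] [NormedAddCommGroup HL]
    [InnerProductSpace ℂ HL] {kK : X → HK} {kL : X → HL}
    (hord : KernelLE (fun a b => ⟪kK a, kK b⟫) (fun a b => ⟪kL a, kL b⟫)) (c : X →₀ ℂ) :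
    ‖Finsupp.linearCombination ℂ kK c‖ ≤ ‖Finsupp.linearCombination ℂ kL c‖ := by
  rw [Finsupp.linearCombination_eq_sum_equivFin, Finsupp.linearCombination_eq_sum_equivFin]
  refine sq_le_sq₀ (norm_nonneg _) (norm_nonneg _) |>.mp ?_
  rw [← inner_self_eq_norm_sq (𝕜 := ℂ), ← inner_self_eq_norm_sq (𝕜 := ℂ),
    inner_sum_smul_self_eq_pdSum, inner_sum_smul_self_eq_pdSum]
  exact Complex.re_le_re (hord _ _ _)

theorem KernelLE.exists_norm_le_one_apply_eq {X HK HL : Type*}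
    [NormedAddCommGroup HK] [InnerProductSpace ℂ HK] [CompleteSpace HK]
    [NormedAddCommGroup HL] [InnerProductSpace ℂ HL] {kK : X → HK} {kL : X → HL}
    (hord : KernelLE (fun a b => ⟪kK a, kK b⟫) (fun a b => ⟪kL a, kL b⟫))
    (hdense : (Submodule.span ℂ (Set.range kL)).topologicalClosure = ⊤) :
    ∃ S : HL →L[ℂ] HK, ‖S‖ ≤ 1 ∧ ∀ x, S (kL x) = kK x := by
  have hdr : DenseRange (Finsupp.linearCombination ℂ kL) := by
    rw [DenseRange, ← LinearMap.coe_range, Finsupp.range_linearCombination]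
    exact Submodule.dense_iff_topologicalClosure_eq_top.mpr hdense
  have hbound (c : X →₀ ℂ) :
      ‖Finsupp.linearCombination ℂ kK c‖ ≤ 1 * ‖Finsupp.linearCombination ℂ kL c‖ := by
    rw [one_mul]
    exact hord.norm_linearCombination_le c
  refine ⟨(Finsupp.linearCombination ℂ kK).extendOfNorm (Finsupp.linearCombination ℂ kL),
    LinearMap.opNorm_extendOfNorm_le hdr zero_le_one hbound, fun x => ?_⟩
  simpa using LinearMap.extendOfNorm_eq hdr ⟨1, hbound⟩ (Finsupp.single x 1)

theorem stmt_13_general {X : Type*} (K L : X → X → ℂ)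
    (hord : KernelLE K L)
    {HK : Type*} [NormedAddCommGroup HK] [InnerProductSpace ℂ HK] [CompleteSpace HK]
    [TopologicalSpace.SeparableSpace HK]
    (ιK : HK →ₗ[ℂ] (X → ℂ))
    (kK : X → HK) (hkK : ∀ x, ιK (kK x) = fun y => K y x)
    (hrepK : ∀ (g : HK) (x : X), ιK g x = ⟪kK x, g⟫)
    {HL : Type*} [NormedAddCommGroup HL] [InnerProductSpace ℂ HL] [CompleteSpace HL]
    (ιL : HL →ₗ[ℂ] (X → ℂ))
    (kL : X → HL) (hkL : ∀ x, ιL (kL x) = fun y => L y x)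
    (hrepL : ∀ (g : HL) (x : X), ιL g x = ⟪kL x, g⟫)
    (hdense : (Submodule.span ℂ (Set.range kL)).topologicalClosure = ⊤) :
    ∃ T : HL →L[ℂ] lp (fun _ : ℕ => ℂ) 2,
      ‖T‖ ≤ 1 ∧
      (∀ x y, ⟪T (kL x), T (kL y)⟫ = K x y) ∧
      (∀ x y, ιL ((ContinuousLinearMap.adjoint T) (T (kL y))) x = K x y) := by
  have hK : (fun a b => ⟪kK a, kK b⟫) = K := funext₂ fun a b => by rw [← hrepK, hkK]
  have hL : (fun a b => ⟪kL a, kL b⟫) = L := funext₂ fun a b => by rw [← hrepL, hkL]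
  obtain ⟨S, hS, hSk⟩ := KernelLE.exists_norm_le_one_apply_eq (hK ▸ hL ▸ hord) hdense
  obtain ⟨Φ⟩ := exists_linearIsometry_lp_nat ℂ HK
  have hT (x y : X) : ⟪Φ (S (kL x)), Φ (S (kL y))⟫ = K x y := by
    rw [Φ.inner_map_map, hSk, hSk, ← hK]
  refine ⟨Φ.toContinuousLinearMap ∘L S, by rwa [Φ.norm_toContinuousLinearMap_comp], hT,
    fun x y => ?_⟩
  rw [hrepL, ContinuousLinearMap.adjoint_inner_right]
  exact hT x y

theorem stmt_13 {X : Type*} (K L : X → X → ℂ)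
    (hKpd : IsPosDefKernel K) (hLpd : IsPosDefKernel L) (hord : KernelLE K L)
    {HK : Type*} [NormedAddCommGroup HK] [InnerProductSpace ℂ HK] [CompleteSpace HK]
    [TopologicalSpace.SeparableSpace HK]
    (ιK : HK →ₗ[ℂ] (X → ℂ)) (hιK : Function.Injective ιK)
    (kK : X → HK) (hkK : ∀ x, ιK (kK x) = fun y => K y x)
    (hrepK : ∀ (g : HK) (x : X), ιK g x = ⟪kK x, g⟫)
    {HL : Type*} [NormedAddCommGroup HL] [InnerProductSpace ℂ HL] [CompleteSpace HL]
    (ιL : HL →ₗ[ℂ] (X → ℂ)) (hιL : Function.Injective ιL)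
    (kL : X → HL) (hkL : ∀ x, ιL (kL x) = fun y => L y x)
    (hrepL : ∀ (g : HL) (x : X), ιL g x = ⟪kL x, g⟫)
    (hdense : (Submodule.span ℂ (Set.range kL)).topologicalClosure = ⊤) :
    ∃ T : HL →L[ℂ] lp (fun _ : ℕ => ℂ) 2,
      ‖T‖ ≤ 1 ∧
      (∀ x y, ⟪T (kL x), T (kL y)⟫ = K x y) ∧
      (∀ x y, ιL ((ContinuousLinearMap.adjoint T) (T (kL y))) x = K x y) :=
  stmt_13_general K L hord ιK kK hkK hrepK ιL kL hkL hrepL hdense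
end
end
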